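/- arXiv:1301.5268 — 4 statements merged into one kernel-verified Lean document; each statement's English description precedes it below -/
import Mathlib

section
/- Let Γ ⊂ Z^d be (K,Q)-relatively dense with K ∈ ℕ, and let A be a finite subset of Z^d \ Γ. Then the number of boundary edges of A satisfies |∂A| ≥ K_*^{-d} |A|, where K_* = K if K is odd and K_* = K+1 if K is even. -/
open scoped BigOperators

noncomputable section

/-- `ℤ^d`. -/
abbrev Zd (d : ℕ) := Fin d → ℤ

/-- `ℓ¹` distance on `ℤ^d`. -/
def dist1 {d : ℕ} (x y : Zd d) : ℕ := ∑ i, (x i - y i).natAbs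

/-- the `i`-th coordinate unit vector. -/
def unitVec {d : ℕ} (i : Fin d) : Zd d := fun j => if j = i then 1 else 0

/-- the negative discrete Laplacian: `(-Δφ)(x) = Σ_{‖x-y‖₁=1} (φ(x) - φ(y))`. -/
def negLap {d : ℕ} (φ : Zd d → ℝ) (x : Zd d) : ℝ :=
  ∑ i, ((φ x - φ (x + unitVec i)) + (φ x - φ (x - unitVec i)))

/-- characteristic function of a set. -/
def chi {d : ℕ} (A : Set (Zd d)) : Zd d → ℝ := A.indicator fun _ => 1

/-- edge boundary `∂A = {(x,y) ∈ A × Aᶜ : ‖x-y‖₁ = 1}`. -/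
def bdry {d : ℕ} (A : Set (Zd d)) : Set (Zd d × Zd d) :=
  {p | p.1 ∈ A ∧ p.2 ∉ A ∧ dist1 p.1 p.2 = 1}

/-- squared `ℓ²` norm (for finitely supported functions). -/
def norm2 {d : ℕ} (φ : Zd d → ℝ) : ℝ := ∑ᶠ x, φ x ^ 2

/-- quadratic form `⟨φ, (-Δ + V)φ⟩` (for finitely supported `φ`). -/
def energy {d : ℕ} (V : Zd d → ℝ) (φ : Zd d → ℝ) : ℝ :=
  ∑ᶠ x, φ x * (negLap φ x + V x * φ x)

/-- `V` is a bounded potential. -/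
def BddPot {d : ℕ} (V : Zd d → ℝ) : Prop := ∃ C, ∀ x, |V x| ≤ C

/-- the spread `spr(V) = sup V - inf V` of a bounded potential. -/
def spr {d : ℕ} (V : Zd d → ℝ) : ℝ := sSup (Set.range V) - sInf (Set.range V)

/-- `E_∅(H) = inf σ(-Δ + V)`, characterized variationally over normalized finitely
supported functions. -/
def E0 {d : ℕ} (V : Zd d → ℝ) : ℝ :=
  sInf {r | ∃ φ : Zd d → ℝ, (Function.support φ).Finite ∧ norm2 φ = 1 ∧ r = energy V φ}

/-- `E_Γ(H) = inf σ(H_Γ)`, the ground state energy of the `Γ`-trimmed operator,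
characterized variationally over normalized finitely supported functions vanishing on `Γ`. -/
def EG {d : ℕ} (V : Zd d → ℝ) (Γ : Set (Zd d)) : ℝ :=
  sInf {r | ∃ φ : Zd d → ℝ, (Function.support φ).Finite ∧ (∀ x ∈ Γ, φ x = 0) ∧
    norm2 φ = 1 ∧ r = energy V φ}

/-- `E_Γ(H,t) = inf σ(H + t χ_Γ)`. -/
def EGt {d : ℕ} (V : Zd d → ℝ) (Γ : Set (Zd d)) (t : ℝ) : ℝ :=
  E0 fun x => V x + t * chi Γ x

/-- the open box `Λ⁰_K(ζ) = {y : ‖y-ζ‖_∞ < K/2}`. -/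
def Lam0 {d : ℕ} (K : ℕ) (ζ : Zd d) : Set (Zd d) := {y | ∀ i, 2 * (y i - ζ i).natAbs < K}

/-- `Γ` is `(K,Q)`-relatively dense: `|Γ ∩ Λ⁰_K(ζ)| ≥ Q` for all `ζ ∈ KZ^d`. -/
def RelDense {d : ℕ} (Γ : Set (Zd d)) (K Q : ℕ) : Prop :=
  ∀ z : Zd d, Q ≤ (Γ ∩ Lam0 K fun i => (K : ℤ) * z i).ncard

/-- `K_* = K` if `K` is odd, `K+1` if `K` is even. -/
def Kstar (K : ℕ) : ℕ := if K % 2 = 1 then K else K + 1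

/-- `⟨χ_A, (-Δ)χ_A⟩` for a finite set `A`; for `A ⊆ Γᶜ` this coincides with
`⟨χ_A, (-Δ_Γ)χ_A⟩` for the `Γ`-trimmed Laplacian. -/
def qform {d : ℕ} (A : Finset (Zd d)) : ℝ := ∑ x ∈ A, negLap (chi ↑A) x

/-- Cheeger constant `β(Γ)` of the `Γ`-trimmed Laplacian. -/
def betaG {d : ℕ} (Γ : Set (Zd d)) : ℝ :=
  sInf {r | ∃ A : Finset (Zd d), A.Nonempty ∧ (↑A : Set (Zd d)) ⊆ Γᶜ ∧
    r = qform A / A.card}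

/-- `⟨χ_A, H(t)χ_A⟩ = ⟨χ_A, (-Δ)χ_A⟩ + t|A ∩ Γ|` for a finite set `A`. -/
def qformT {d : ℕ} (Γ : Set (Zd d)) (t : ℝ) (A : Finset (Zd d)) : ℝ :=
  qform A + t * ((↑A ∩ Γ : Set (Zd d)).ncard)

/-- Cheeger constant `β(t)` of `H(t) = -Δ + t χ_Γ`. -/
def betaT {d : ℕ} (Γ : Set (Zd d)) (t : ℝ) : ℝ :=
  sInf {r | ∃ A : Finset (Zd d), A.Nonempty ∧ r = qformT Γ t A / A.card}

/-- the box `Λ_L(x₀) = {y : ‖y-x₀‖_∞ ≤ L/2}`. -/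
def box {d : ℕ} (L : ℕ) (x₀ : Zd d) : Set (Zd d) := {y | ∀ i, 2 * (y i - x₀ i).natAbs ≤ L}

/-- `φ` is an eigenfunction of `H_Λ = (-Δ + V)_Λ` with eigenvalue `E`. -/
def eigOn {d : ℕ} (V : Zd d → ℝ) (Λ : Set (Zd d)) (φ : Zd d → ℝ) (E : ℝ) : Prop :=
  (∀ x ∉ Λ, φ x = 0) ∧ ∀ x ∈ Λ, negLap φ x + V x * φ x = E * φ x

/-- `E^Λ = inf σ(H_Λ)`, variationally. -/
def Ebox {d : ℕ} (V : Zd d → ℝ) (Λ : Set (Zd d)) : ℝ :=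
  sInf {r | ∃ φ : Zd d → ℝ, (∀ x ∉ Λ, φ x = 0) ∧ norm2 φ = 1 ∧ r = energy V φ}

namespace Stmt1Aux

variable {d : ℕ}

/-- half-width offset used for the tiling cells. -/
def mm (K : ℕ) : ℤ := ((K : ℤ) - 1) / 2

/-- membership in the tiling cell with index `z`. -/
def Cell (K : ℕ) (z y : Zd d) : Prop :=
  ∀ i, (K : ℤ) * z i - mm K ≤ y i ∧ y i ≤ (K : ℤ) * z i + ((K : ℤ) - 1) - mm K

lemma exists_cell (K : ℕ) (hK : 0 < K) (y : Zd d) : ∃ z : Zd d, Cell K z y := by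
  refine ⟨fun i => (y i + mm K) / (K : ℤ), fun i => ?_⟩
  have h0 : (0:ℤ) < (K:ℤ) := by exact_mod_cast hK
  have h1 : (K:ℤ) * ((y i + mm K) / (K : ℤ)) + (y i + mm K) % (K:ℤ) = y i + mm K :=
    Int.mul_ediv_add_emod _ _
  have h2 : 0 ≤ (y i + mm K) % (K:ℤ) := Int.emod_nonneg _ h0.ne'
  have h3 : (y i + mm K) % (K:ℤ) < (K:ℤ) := Int.emod_lt_of_pos _ h0
  show (K : ℤ) * ((y i + mm K) / (K : ℤ)) - mm K ≤ y i ∧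
      y i ≤ (K : ℤ) * ((y i + mm K) / (K : ℤ)) + ((K : ℤ) - 1) - mm K
  omega

lemma cell_unique {K : ℕ} (hK : 0 < K) {z z' y : Zd d}
    (h : Cell K z y) (h' : Cell K z' y) : z = z' := by
  have h0 : (0:ℤ) < (K:ℤ) := by exact_mod_cast hK
  funext i
  have h1 := (h i).1; have h2 := (h i).2
  have h3 := (h' i).1; have h4 := (h' i).2
  have ha : (K:ℤ) * z i < (K:ℤ) * (z' i + 1) := by
    rw [mul_add, mul_one]; linarith
  have hb : (K:ℤ) * z' i < (K:ℤ) * (z i + 1) := by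
    rw [mul_add, mul_one]; linarith
  have ha' := lt_of_mul_lt_mul_left ha h0.le
  have hb' := lt_of_mul_lt_mul_left hb h0.le
  omega

/-- the cell as a finset. -/
def cellF (K : ℕ) (z : Zd d) : Finset (Zd d) :=
  Fintype.piFinset fun i => Finset.Icc ((K:ℤ) * z i - mm K) ((K:ℤ) * z i + ((K:ℤ) - 1) - mm K)

lemma mem_cellF {K : ℕ} {z y : Zd d} : y ∈ cellF K z ↔ Cell K z y := by
  simp [cellF, Cell, Fintype.mem_piFinset, Finset.mem_Icc]

lemma cellF_card (K : ℕ) (z : Zd d) : (cellF K z).card = K ^ d := by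
  rw [cellF, Fintype.card_piFinset]
  have : ∀ i : Fin d,
      (Finset.Icc ((K:ℤ) * z i - mm K) ((K:ℤ) * z i + ((K:ℤ) - 1) - mm K)).card = K := by
    intro i
    rw [Int.card_Icc]
    omega
  simp [this]

lemma lam0_subset_cell {K : ℕ} {z y : Zd d}
    (h : y ∈ Lam0 K fun i => (K : ℤ) * z i) : Cell K z y := by
  intro i
  have hh : 2 * (y i - (K:ℤ) * z i).natAbs < K := h i
  have hm : mm K = ((K:ℤ) - 1) / 2 := rfl
  omega

lemma dist1_self (x : Zd d) : dist1 x x = 0 := by simp [dist1]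

lemma exists_edge (K : ℕ) (A : Finset (Zd d)) (z γ : Zd d)
    (hγc : Cell K z γ) (hγA : γ ∉ A) :
    ∀ n (x : Zd d), dist1 x γ = n → Cell K z x → x ∈ A →
      ∃ p q : Zd d, p ∈ A ∧ q ∉ A ∧ dist1 p q = 1 ∧ Cell K z p := by
  intro n
  induction n with
  | zero =>
    intro x hdist hxc hxA
    have hx : x = γ := by
      funext i
      have h0 : ∀ j ∈ Finset.univ, (x j - γ j).natAbs = 0 :=
        Finset.sum_eq_zero_iff.mp hdist
      have := h0 i (Finset.mem_univ i)
      omega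
    exact absurd (hx ▸ hxA) hγA
  | succ n ih =>
    intro x hdist hxc hxA
    have hne : x ≠ γ := by
      rintro rfl
      rw [dist1_self] at hdist
      omega
    obtain ⟨i, hi⟩ : ∃ i, x i ≠ γ i := by
      by_contra h
      push_neg at h
      exact hne (funext h)
    set s : ℤ := if x i < γ i then 1 else -1 with hs_def
    have hs : (x i < γ i ∧ s = 1) ∨ (γ i < x i ∧ s = -1) := by
      rw [hs_def]; split <;> omega
    set x' : Zd d := Function.update x i (x i + s) with hx'_def
    have hx'i : x' i = x i + s := Function.update_self i _ x
    have hx'j : ∀ j, j ≠ i → x' j = x j := fun j hj => Function.update_of_ne hj _ x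
    have esum : ∀ w : Zd d, dist1 w γ =
        (w i - γ i).natAbs + ∑ j ∈ Finset.univ.erase i, (w j - γ j).natAbs := by
      intro w
      rw [dist1, ← Finset.add_sum_erase _ _ (Finset.mem_univ i)]
    have esame : ∑ j ∈ Finset.univ.erase i, (x' j - γ j).natAbs
        = ∑ j ∈ Finset.univ.erase i, (x j - γ j).natAbs := by
      refine Finset.sum_congr rfl fun j hj => ?_
      rw [hx'j j (Finset.ne_of_mem_erase hj)]
    have hterm : (x' i - γ i).natAbs + 1 = (x i - γ i).natAbs := by
      rw [hx'i]
      rcases hs with ⟨h1, h2⟩ | ⟨h1, h2⟩ <;> omega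
    have hd' : dist1 x' γ = n := by
      have e1 := esum x
      have e2 := esum x'
      omega
    have hx'c : Cell K z x' := by
      intro j
      by_cases hj : j = i
      · subst hj
        rw [hx'i]
        have := hxc j
        have := hγc j
        rcases hs with ⟨h1, h2⟩ | ⟨h1, h2⟩ <;> omega
      · rw [hx'j j hj]; exact hxc j
    by_cases hx' : x' ∈ A
    · exact ih x' hd' hx'c hx'
    · refine ⟨x, x', hxA, hx', ?_, hxc⟩
      rw [dist1, ← Finset.add_sum_erase _ _ (Finset.mem_univ i)]
      have : ∑ j ∈ Finset.univ.erase i, (x j - x' j).natAbs = 0 := by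
        refine Finset.sum_eq_zero fun j hj => ?_
        rw [hx'j j (Finset.ne_of_mem_erase hj)]
        omega
      rw [this, hx'i]
      rcases hs with ⟨h1, h2⟩ | ⟨h1, h2⟩ <;> omega

lemma bdry_finite (A : Finset (Zd d)) : (bdry (↑A : Set (Zd d))).Finite := by
  have hball : ∀ x : Zd d, {q : Zd d | ∀ i, (x i - q i).natAbs ≤ 1}.Finite := by
    intro x
    refine Set.Finite.subset (Set.Finite.pi fun i => Set.finite_Icc (x i - 1) (x i + 1)) ?_
    intro q hq
    rw [Set.mem_pi]
    intro i _
    have := hq i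
    simp only [Set.mem_Icc]
    omega
  refine Set.Finite.subset (Set.Finite.biUnion A.finite_toSet
    (fun x _ => (Set.finite_singleton x).prod (hball x))) ?_
  rintro ⟨p, q⟩ ⟨hp, _, hpq⟩
  refine Set.mem_biUnion hp ⟨rfl, ?_⟩
  intro i
  have : (p i - q i).natAbs ≤ ∑ j, (p j - q j).natAbs :=
    Finset.single_le_sum (f := fun j => (p j - q j).natAbs)
      (fun j _ => Nat.zero_le _) (Finset.mem_univ i)
  rw [show (∑ j, (p j - q j).natAbs) = dist1 p q from rfl, hpq] at this
  exact this

end Stmt1Aux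

open Stmt1Aux in
/-- if `Γ` is `(K,Q)`-relatively dense and `A` is a finite subset of
`ℤ^d \ Γ`, then `|∂A| ≥ K_*^{-d} |A|`. -/
theorem stmt1 (d K Q : ℕ) (hd : 0 < d) (hK : 0 < K) (hQ : 0 < Q)
    (Γ : Set (Zd d)) (hΓ : RelDense Γ K Q)
    (A : Finset (Zd d)) (hA : ∀ x ∈ A, x ∉ Γ) :
    ((Kstar K : ℝ) ^ d)⁻¹ * A.card ≤ (bdry (↑A : Set (Zd d))).ncard := by
  classical
  have key : ∀ x ∈ A, ∃ e : Zd d × Zd d, e ∈ bdry (↑A : Set (Zd d)) ∧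
      ∃ z : Zd d, Cell K z x ∧ Cell K z e.1 := by
    intro x hx
    obtain ⟨z, hz⟩ := exists_cell K hK x
    have hne : (Γ ∩ Lam0 K fun i => (K:ℤ) * z i).Nonempty := by
      refine Set.nonempty_of_ncard_ne_zero ?_
      have := hΓ z
      omega
    obtain ⟨γ, hγΓ, hγbox⟩ := hne
    have hγc : Cell K z γ := lam0_subset_cell hγbox
    have hγA : γ ∉ A := fun hmem => hA γ hmem hγΓ
    obtain ⟨p, q, hpA, hqA, hpq, hpc⟩ :=
      exists_edge K A z γ hγc hγA (dist1 x γ) x rfl hz hx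
    exact ⟨(p, q), ⟨hpA, hqA, hpq⟩, z, hz, hpc⟩
  choose! f hf1 hf2 using key
  have hcard : A.card ≤ K ^ d * (A.image f).card := by
    apply Finset.card_le_mul_card_image
    intro e he
    obtain ⟨x₀, hx₀A, hx₀e⟩ := Finset.mem_image.mp he
    obtain ⟨z₀, hx₀c, hp₀c⟩ := hf2 x₀ hx₀A
    rw [hx₀e] at hp₀c
    calc (A.filter fun x => f x = e).card ≤ (cellF K z₀).card := by
          refine Finset.card_le_card fun x hx => ?_
          obtain ⟨hxA, hxe⟩ := Finset.mem_filter.mp hx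
          obtain ⟨z, hxc, hpc⟩ := hf2 x hxA
          rw [hxe] at hpc
          have : z = z₀ := cell_unique hK hpc hp₀c
          rw [mem_cellF]
          exact this ▸ hxc
      _ = K ^ d := cellF_card K z₀
  have hsub : ↑(A.image f) ⊆ bdry (↑A : Set (Zd d)) := by
    intro e he
    obtain ⟨x, hx, rfl⟩ := Finset.mem_image.mp (Finset.mem_coe.mp he)
    exact hf1 x hx
  have h2 : (A.image f).card ≤ (bdry (↑A : Set (Zd d))).ncard := by
    rw [← Set.ncard_coe_finset]
    exact Set.ncard_le_ncard hsub (bdry_finite A)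
  have hKs : K ≤ Kstar K := by unfold Kstar; split <;> omega
  have hKs0 : 0 < Kstar K := by unfold Kstar; split <;> omega
  have main : A.card ≤ Kstar K ^ d * (bdry (↑A : Set (Zd d))).ncard :=
    le_trans hcard (Nat.mul_le_mul (Nat.pow_le_pow_left hKs d) h2)
  have hpos : (0:ℝ) < (Kstar K : ℝ) ^ d := by positivity
  rw [inv_mul_le_iff₀ hpos]
  calc (A.card : ℝ) ≤ ((Kstar K ^ d * (bdry (↑A : Set (Zd d))).ncard : ℕ) : ℝ) := by
        exact_mod_cast main
    _ = (Kstar K : ℝ) ^ d * (bdry (↑A : Set (Zd d))).ncard := by push_cast; ring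
end
end

section
/- Let Γ ⊊ Z^d be (K,Q)-relatively dense. Then the Cheeger constant β(Γ) = inf over nonempty finite A ⊂ Z^d \ Γ of ⟨χ_A, (-Δ_Γ)χ_A⟩ / |A| satisfies K_*^{-d} ≤ β(Γ) ≤ 2d. -/
open scoped BigOperators

noncomputable section

/-!
The upper bound comes from a single site outside `Γ`, whose `2d` neighbours all lie outside it.
For the lower bound, tile `ℤ^d` by boxes of side `K`, each containing a point of `Γ`, hence a
point outside `A`. Walking inside a box from a point of `A` to such a point, one leaves `A`, so
every box meeting `A` contains a point of `A` with a neighbour outside `A`, and each such point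
contributes at least `1` to `⟨χ_A, -Δ χ_A⟩`. Hence `|A| ≤ K^d · ⟨χ_A, -Δ χ_A⟩`.
-/

section

variable {d : ℕ}

def exitCount (A : Finset (Zd d)) (x : Zd d) : ℝ :=
  ∑ i, ((if x + unitVec i ∈ A then 0 else 1) + (if x - unitVec i ∈ A then 0 else 1))

def innerBdry (A : Finset (Zd d)) : Finset (Zd d) :=
  A.filter fun u => ∃ i, u + unitVec i ∉ A ∨ u - unitVec i ∉ A

lemma negLap_chi_of_mem {A : Finset (Zd d)} {x : Zd d} (hx : x ∈ A) :
    negLap (chi ↑A) x = exitCount A x := by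
  refine Finset.sum_congr rfl fun i _ => ?_
  simp only [chi, Set.indicator_apply, Finset.mem_coe, hx, if_true]
  split_ifs <;> norm_num

lemma qform_eq_sum_exitCount (A : Finset (Zd d)) : qform A = ∑ x ∈ A, exitCount A x :=
  Finset.sum_congr rfl fun _ hx => negLap_chi_of_mem hx

lemma exitCount_nonneg (A : Finset (Zd d)) (x : Zd d) : 0 ≤ exitCount A x :=
  Finset.sum_nonneg fun _ _ => by split_ifs <;> norm_num

lemma one_le_exitCount {A : Finset (Zd d)} {x : Zd d}
    (h : ∃ i, x + unitVec i ∉ A ∨ x - unitVec i ∉ A) : 1 ≤ exitCount A x := by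
  obtain ⟨i, hi⟩ := h
  refine le_trans ?_ (Finset.single_le_sum (fun j _ => ?_) (Finset.mem_univ i))
  · rcases hi with h | h <;> simp only [h, if_false] <;> split_ifs <;> norm_num
  · split_ifs <;> norm_num

lemma qform_nonneg (A : Finset (Zd d)) : 0 ≤ qform A := by
  rw [qform_eq_sum_exitCount]
  exact Finset.sum_nonneg fun x _ => exitCount_nonneg A x

lemma card_innerBdry_le_qform (A : Finset (Zd d)) : ((innerBdry A).card : ℝ) ≤ qform A := by
  rw [qform_eq_sum_exitCount, Finset.card_eq_sum_ones, Nat.cast_sum, Nat.cast_one]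
  calc ∑ x ∈ innerBdry A, (1 : ℝ)
      ≤ ∑ x ∈ innerBdry A, exitCount A x :=
        Finset.sum_le_sum fun x hx => one_le_exitCount (Finset.mem_filter.mp hx).2
    _ ≤ ∑ x ∈ A, exitCount A x :=
        Finset.sum_le_sum_of_subset_of_nonneg (Finset.filter_subset _ _)
          fun x _ _ => exitCount_nonneg A x

lemma unitVec_ne_zero (i : Fin d) : unitVec i ≠ 0 :=
  fun h => by simpa [unitVec] using congrFun h i

lemma qform_singleton (x : Zd d) : qform {x} = 2 * d := by
  simp [qform_eq_sum_exitCount, exitCount, unitVec_ne_zero, two_mul]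

lemma exists_neighbour_closer {x y : Zd d} (h : x ≠ y) :
    ∃ i, ∃ x', (x' = x + unitVec i ∨ x' = x - unitVec i) ∧
      dist1 x' y < dist1 x y ∧ x' ∈ Set.uIcc x y := by
  obtain ⟨i, hi⟩ := Function.ne_iff.mp h
  rcases lt_or_gt_of_ne hi with hlt | hgt
  on_goal 1 => refine ⟨i, x + unitVec i, Or.inl rfl, ?_⟩
  on_goal 2 => refine ⟨i, x - unitVec i, Or.inr rfl, ?_⟩
  all_goals
    refine ⟨Finset.sum_lt_sum (fun j _ => ?_) ⟨i, Finset.mem_univ i, ?_⟩, fun j => ?_, fun j => ?_⟩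
    all_goals
      simp only [Pi.add_apply, Pi.sub_apply, Pi.inf_apply, Pi.sup_apply, unitVec, ↓reduceIte]
      try split_ifs with hj
      all_goals first | omega | (subst hj; omega)

lemma exists_mem_innerBdry_of_mem_Icc {A : Finset (Zd d)} {lo hi x y : Zd d}
    (hx : x ∈ A) (hy : y ∉ A) (hxI : x ∈ Set.Icc lo hi) (hyI : y ∈ Set.Icc lo hi) :
    ∃ u ∈ innerBdry A, u ∈ Set.Icc lo hi := by
  classical
  obtain ⟨u, hu, hmin⟩ := Finset.exists_min_image (A.filter (· ∈ Set.Icc lo hi))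
    (dist1 · y) ⟨x, Finset.mem_filter.mpr ⟨hx, hxI⟩⟩
  rw [Finset.mem_filter] at hu
  refine ⟨u, Finset.mem_filter.mpr ⟨hu.1, ?_⟩, hu.2⟩
  by_contra! hinterior
  obtain ⟨i, u', hu', hcloser, hseg⟩ :=
    exists_neighbour_closer (show u ≠ y from fun h => hy (h ▸ hu.1))
  have hu'A : u' ∈ A := by
    rcases hu' with rfl | rfl
    exacts [(hinterior i).1, (hinterior i).2]
  have := hmin u' (Finset.mem_filter.mpr ⟨hu'A, Set.uIcc_subset_Icc hu.2 hyI hseg⟩)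
  omega

-- Half-open rather than open boxes: for even `K` the boxes `Lam0 K (K • z)` do not tile `ℤ^d`.
def cellIndex (K : ℕ) (y : Zd d) : Zd d := fun i => (y i + (K : ℤ) / 2) / K

def cell (K : ℕ) (z : Zd d) : Finset (Zd d) :=
  Finset.Icc (fun i => K * z i - (K : ℤ) / 2) (fun i => K * z i - (K : ℤ) / 2 + (K - 1))

lemma card_cell (K : ℕ) (z : Zd d) : (cell K z).card = K ^ d := by
  simp [cell, Pi.card_Icc, Int.card_Icc, show ∀ a : ℤ, a + (K - 1) + 1 - a = K by intro; ring]

lemma mem_cell_iff_cellIndex_eq {K : ℕ} (hK : 0 < K) {y z : Zd d} :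
    y ∈ cell K z ↔ cellIndex K y = z := by
  have hK' : (0 : ℤ) < K := by exact_mod_cast hK
  simp only [cell, Finset.mem_Icc, Pi.le_def, funext_iff, cellIndex, ← forall_and]
  refine forall_congr' fun i => ?_
  constructor
  · intro h
    exact ((Int.ediv_emod_unique (r := y i + K / 2 - K * z i) hK').mpr
      ⟨by ring, by omega, by omega⟩).1
  · intro h
    obtain ⟨hdiv, hrem₀, hremK⟩ := (Int.ediv_emod_unique hK').mp ⟨h, rfl⟩
    omega

lemma Lam0_subset_cell (K : ℕ) (z : Zd d) :
    Lam0 K (fun i => (K : ℤ) * z i) ⊆ cell K z := fun y hy => by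
  simp only [Lam0, Set.mem_ofPred_eq] at hy
  simp only [cell, Finset.coe_Icc, Set.mem_Icc, Pi.le_def]
  exact ⟨fun i => by have := hy i; omega, fun i => by have := hy i; omega⟩

lemma card_le_pow_mul_card_innerBdry {K : ℕ} (hK : 0 < K) {A : Finset (Zd d)}
    (hcell : ∀ z, ∃ γ ∈ cell K z, γ ∉ A) : A.card ≤ K ^ d * (innerBdry A).card := by
  have himage : A.image (cellIndex K) ⊆ (innerBdry A).image (cellIndex K) := by
    intro z hz
    obtain ⟨x, hx, rfl⟩ := Finset.mem_image.mp hz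
    obtain ⟨γ, hγ, hγA⟩ := hcell (cellIndex K x)
    obtain ⟨u, hu, hucell⟩ := exists_mem_innerBdry_of_mem_Icc hx hγA
      (Finset.mem_Icc.mp ((mem_cell_iff_cellIndex_eq hK).mpr rfl)) (Finset.mem_Icc.mp hγ)
    exact Finset.mem_image.mpr ⟨u, hu, (mem_cell_iff_cellIndex_eq hK).mp (Finset.mem_Icc.mpr hucell)⟩
  calc A.card ≤ K ^ d * (A.image (cellIndex K)).card :=
        Finset.card_le_mul_card_image (f := cellIndex K) A _ fun z _ => (card_cell K z).symm ▸
          Finset.card_le_card fun y hy =>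
            (mem_cell_iff_cellIndex_eq hK).mpr (Finset.mem_filter.mp hy).2
    _ ≤ K ^ d * ((innerBdry A).image (cellIndex K)).card := by gcongr
    _ ≤ K ^ d * (innerBdry A).card :=
        Nat.mul_le_mul_left _ Finset.card_image_le

lemma card_le_pow_mul_qform {K Q : ℕ} (hK : 0 < K) (hQ : 0 < Q) {Γ : Set (Zd d)}
    (hΓ : RelDense Γ K Q) {A : Finset (Zd d)} (hA : (↑A : Set (Zd d)) ⊆ Γᶜ) :
    (A.card : ℝ) ≤ K ^ d * qform A := by
  have hcell (z : Zd d) : ∃ γ ∈ cell K z, γ ∉ A := by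
    obtain ⟨γ, hγΓ, hγ⟩ := Set.nonempty_of_ncard_ne_zero (hQ.trans_le (hΓ z)).ne'
    exact ⟨γ, Lam0_subset_cell K z hγ, fun h => hA h hγΓ⟩
  calc (A.card : ℝ) ≤ K ^ d * (innerBdry A).card := by
        exact_mod_cast card_le_pow_mul_card_innerBdry hK hcell
    _ ≤ K ^ d * qform A := by gcongr; exact card_innerBdry_le_qform A

lemma two_mul_mem_of_notMem {Γ : Set (Zd d)} {x : Zd d} (hx : x ∉ Γ) :
    (2 * d : ℝ) ∈ {r | ∃ A : Finset (Zd d), A.Nonempty ∧ (↑A : Set (Zd d)) ⊆ Γᶜ ∧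
      r = qform A / A.card} :=
  ⟨{x}, Finset.singleton_nonempty x, by simpa using hx, by simp [qform_singleton]⟩

lemma betaG_le_two_mul {Γ : Set (Zd d)} (hne : Γ ≠ Set.univ) : betaG Γ ≤ 2 * d := by
  obtain ⟨x, hx⟩ := (Set.ne_univ_iff_exists_notMem Γ).mp hne
  refine csInf_le ⟨0, ?_⟩ (two_mul_mem_of_notMem hx)
  rintro r ⟨A, -, -, rfl⟩
  exact div_nonneg (qform_nonneg A) A.card.cast_nonneg

lemma inv_pow_le_betaG {K Q : ℕ} (hK : 0 < K) (hQ : 0 < Q) {Γ : Set (Zd d)}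
    (hne : Γ ≠ Set.univ) (hΓ : RelDense Γ K Q) : ((K : ℝ) ^ d)⁻¹ ≤ betaG Γ := by
  obtain ⟨x, hx⟩ := (Set.ne_univ_iff_exists_notMem Γ).mp hne
  refine le_csInf ⟨_, two_mul_mem_of_notMem hx⟩ ?_
  rintro r ⟨A, hAne, hA, rfl⟩
  rw [le_div_iff₀ (by exact_mod_cast hAne.card_pos), inv_mul_le_iff₀ (by positivity)]
  exact card_le_pow_mul_qform hK hQ hΓ hA

lemma le_Kstar (K : ℕ) : K ≤ Kstar K := by
  unfold Kstar
  split_ifs <;> omega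

end

theorem stmt2_general (d K Q : ℕ) (hK : 0 < K) (hQ : 0 < Q)
    (Γ : Set (Zd d)) (hne : Γ ≠ Set.univ) (hΓ : RelDense Γ K Q) :
    ((Kstar K : ℝ) ^ d)⁻¹ ≤ betaG Γ ∧ betaG Γ ≤ 2 * d := by
  refine ⟨le_trans ?_ (inv_pow_le_betaG hK hQ hne hΓ), betaG_le_two_mul hne⟩
  gcongr
  exact_mod_cast le_Kstar K

/-- for `Γ ⊊ ℤ^d` `(K,Q)`-relatively dense, `K_*^{-d} ≤ β(Γ) ≤ 2d`. -/
theorem stmt2 (d K Q : ℕ) (hd : 0 < d) (hK : 0 < K) (hQ : 0 < Q)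
    (Γ : Set (Zd d)) (hne : Γ ≠ Set.univ) (hΓ : RelDense Γ K Q) :
    ((Kstar K : ℝ) ^ d)⁻¹ ≤ betaG Γ ∧ betaG Γ ≤ 2 * d :=
  stmt2_general d K Q hK hQ Γ hne hΓ
end
end

section
/- Let H = -Δ + V on ℓ²(Z^d) with V bounded, and Γ ⊊ Z^d. Then E_Γ(H) - E_∅(H) ≤ 2d + spr(V), where spr(V) = sup V - inf V. -/
open scoped BigOperators

noncomputable section

/-!
Trial state `δ_{x₀}` at a site `x₀ ∉ Γ`: its energy is `2d + V(x₀) ≤ 2d + sup V`, so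
`E_Γ(H) ≤ 2d + sup V`. On the other hand `-Δ ≥ 0`, because `⟨φ, -Δφ⟩` is the sum of the squared
differences of `φ` along the edges of `ℤ^d`; hence `E_∅(H) ≥ inf V`.
-/

open Function

theorem finsum_mul_second_diff_eq_finsum_sq {G : Type*} [AddGroup G] {φ : G → ℝ}
    (hφ : (support φ).Finite) (v : G) :
    ∑ᶠ x, φ x * ((φ x - φ (x + v)) + (φ x - φ (x - v))) = ∑ᶠ x, (φ x - φ (x + v)) ^ 2 := by
  have hφv : (support fun x => φ (x + v)).Finite :=
    hφ.preimage (Equiv.addRight v).injective.injOn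
  -- summation by parts: shifting `x ↦ x + v` turns each backward difference into a forward one
  have hbackward : ∑ᶠ x, φ x * (φ x - φ (x - v)) = ∑ᶠ x, φ (x + v) * (φ (x + v) - φ x) := by
    rw [← finsum_comp_equiv (Equiv.addRight v)]
    simp only [Equiv.coe_addRight, add_sub_cancel_right]
  calc ∑ᶠ x, φ x * ((φ x - φ (x + v)) + (φ x - φ (x - v)))
      = ∑ᶠ x, φ x * (φ x - φ (x + v)) + ∑ᶠ x, φ x * (φ x - φ (x - v)) := by
        simp only [mul_add]
        exact finsum_add_distrib (hφ.subset (support_mul_subset_left _ _))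
          (hφ.subset (support_mul_subset_left _ _))
    _ = ∑ᶠ x, (φ x * (φ x - φ (x + v)) + φ (x + v) * (φ (x + v) - φ x)) := by
        rw [hbackward, finsum_add_distrib (hφ.subset (support_mul_subset_left _ _))
          (hφv.subset (support_mul_subset_left _ _))]
    _ = ∑ᶠ x, (φ x - φ (x + v)) ^ 2 := finsum_congr fun x => by ring

variable {d : ℕ}

theorem finsum_mul_negLap_nonneg {φ : Zd d → ℝ} (hφ : (support φ).Finite) :
    0 ≤ ∑ᶠ x, φ x * negLap φ x := by
  simp only [negLap, Finset.mul_sum]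
  rw [finsum_sum_comm _ _ fun i _ => hφ.subset (support_mul_subset_left _ _)]
  refine Finset.sum_nonneg fun i _ => ?_
  rw [finsum_mul_second_diff_eq_finsum_sq hφ]
  exact finsum_nonneg fun x => sq_nonneg _

theorem energy_eq_finsum_mul_negLap_add {V φ : Zd d → ℝ} (hφ : (support φ).Finite) :
    energy V φ = ∑ᶠ x, φ x * negLap φ x + ∑ᶠ x, V x * φ x ^ 2 := by
  have hVφ : (support fun x => V x * φ x ^ 2).Finite := by
    refine hφ.subset ((support_mul_subset_right _ _).trans ?_)
    rw [support_pow _ two_ne_zero]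
  rw [energy, ← finsum_add_distrib (hφ.subset (support_mul_subset_left _ _)) hVφ]
  exact finsum_congr fun x => by ring

theorem sInf_range_le_energy {V φ : Zd d → ℝ} (hV : BddBelow (Set.range V))
    (hφ : (support φ).Finite) (hnorm : norm2 φ = 1) :
    sInf (Set.range V) ≤ energy V φ := by
  have hφsq : (support fun x => φ x ^ 2).Finite := by rwa [support_pow _ two_ne_zero]
  have hpot : sInf (Set.range V) ≤ ∑ᶠ x, V x * φ x ^ 2 :=
    calc sInf (Set.range V) = ∑ᶠ x, sInf (Set.range V) * φ x ^ 2 := by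
          rw [← mul_finsum, ← norm2, hnorm, mul_one]
      _ ≤ ∑ᶠ x, V x * φ x ^ 2 :=
          finsum_le_finsum' (hφsq.subset (support_mul_subset_right _ _))
            (hφsq.subset (support_mul_subset_right _ _)) fun x =>
            mul_le_mul_of_nonneg_right (csInf_le hV ⟨x, rfl⟩) (sq_nonneg _)
  rw [energy_eq_finsum_mul_negLap_add hφ]
  linarith [finsum_mul_negLap_nonneg hφ]

theorem support_single_finite (x₀ : Zd d) : (support (Pi.single x₀ (1 : ℝ))).Finite :=
  (Set.finite_singleton x₀).subset Pi.support_single_subset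

theorem norm2_single (x₀ : Zd d) : norm2 (Pi.single x₀ (1 : ℝ)) = 1 := by
  rw [norm2, finsum_eq_single _ x₀ fun x hx => by simp [Pi.single_eq_of_ne hx]]
  simp

theorem add_unitVec_ne_self (x : Zd d) (i : Fin d) : x + unitVec i ≠ x := fun h => by
  simpa [unitVec] using congrFun h i

theorem sub_unitVec_ne_self (x : Zd d) (i : Fin d) : x - unitVec i ≠ x := fun h => by
  simpa [unitVec] using congrFun h i

theorem negLap_single_self (x₀ : Zd d) : negLap (Pi.single x₀ (1 : ℝ)) x₀ = 2 * d := by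
  simp [negLap, Pi.single_eq_of_ne (add_unitVec_ne_self x₀ _),
    Pi.single_eq_of_ne (sub_unitVec_ne_self x₀ _)]
  ring

theorem energy_single (V : Zd d → ℝ) (x₀ : Zd d) :
    energy V (Pi.single x₀ 1) = 2 * d + V x₀ := by
  rw [energy, finsum_eq_single _ x₀ fun x hx => by simp [Pi.single_eq_of_ne hx]]
  simp [negLap_single_self]

theorem EG_le_of_notMem {V : Zd d → ℝ} (hV : BddBelow (Set.range V)) {Γ : Set (Zd d)}
    {x₀ : Zd d} (hx₀ : x₀ ∉ Γ) : EG V Γ ≤ 2 * d + V x₀ := by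
  refine csInf_le ⟨sInf (Set.range V), ?_⟩ ⟨Pi.single x₀ 1, support_single_finite x₀,
    fun x hx => Pi.single_eq_of_ne (ne_of_mem_of_not_mem hx hx₀) 1, norm2_single x₀,
    (energy_single V x₀).symm⟩
  rintro r ⟨φ, hφ, -, hnorm, rfl⟩
  exact sInf_range_le_energy hV hφ hnorm

theorem sInf_range_le_E0 {V : Zd d → ℝ} (hV : BddBelow (Set.range V)) :
    sInf (Set.range V) ≤ E0 V := by
  refine le_csInf ⟨_, Pi.single 0 1, support_single_finite 0, norm2_single 0, rfl⟩ ?_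
  rintro r ⟨φ, hφ, hnorm, rfl⟩
  exact sInf_range_le_energy hV hφ hnorm

theorem BddPot.bddBelow_range {V : Zd d → ℝ} (hV : BddPot V) : BddBelow (Set.range V) := by
  obtain ⟨C, hC⟩ := hV
  exact ⟨-C, by rintro _ ⟨x, rfl⟩; exact neg_le_of_abs_le (hC x)⟩

theorem BddPot.bddAbove_range {V : Zd d → ℝ} (hV : BddPot V) : BddAbove (Set.range V) := by
  obtain ⟨C, hC⟩ := hV
  exact ⟨C, by rintro _ ⟨x, rfl⟩; exact le_of_abs_le (hC x)⟩

theorem stmt6_general (d : ℕ) (V : Zd d → ℝ) (hV : BddPot V)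
    (Γ : Set (Zd d)) (hne : Γ ≠ Set.univ) :
    EG V Γ - E0 V ≤ 2 * d + spr V := by
  obtain ⟨x₀, hx₀⟩ := Set.ne_univ_iff_exists_notMem Γ |>.mp hne
  have hEG := EG_le_of_notMem hV.bddBelow_range hx₀
  have hE0 := sInf_range_le_E0 hV.bddBelow_range
  have hsup : V x₀ ≤ sSup (Set.range V) := le_csSup hV.bddAbove_range ⟨x₀, rfl⟩
  rw [spr]
  linarith

/-- `E_Γ(H) - E_∅(H) ≤ 2d + spr(V)`. -/
theorem stmt6 (d : ℕ) (hd : 0 < d) (V : Zd d → ℝ) (hV : BddPot V)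
    (Γ : Set (Zd d)) (hne : Γ ≠ Set.univ) :
    EG V Γ - E0 V ≤ 2 * d + spr V :=
  stmt6_general d V hV Γ hne
end
end

section
/- Let ψ_g be the strictly positive normalized ground state of H_Λ = (-Δ + V)_Λ on a box Λ = Λ_L(x₀) ⊂ Z^d, with ground state energy E^Λ. Then for all x ∈ Λ and m ∈ ℕ: ψ_g(x) ≥ Y^{-m} Σ_{y ∈ Λ, ‖x-y‖₁ ≤ m} ψ_g(y), where Y = 2d + 1 + spr(V). -/
open scoped BigOperators

noncomputable section

section Aux

lemma sum_union_le_real {α : Type*} [DecidableEq α] {A B : Finset α} {f : α → ℝ}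
    (hf : ∀ b, 0 ≤ f b) : (A ∪ B).sum f ≤ A.sum f + B.sum f := by
  have h1 := Finset.sum_union_inter (s₁ := A) (s₂ := B) (f := f)
  have h2 : 0 ≤ (A ∩ B).sum f := Finset.sum_nonneg fun i _ => hf i
  linarith

lemma sum_biUnion_le_real {α β : Type*} [DecidableEq α] [DecidableEq β] {s : Finset α}
    {t : α → Finset β} {f : β → ℝ} (hf : ∀ b, 0 ≤ f b) :
    (s.biUnion t).sum f ≤ ∑ a ∈ s, (t a).sum f := by
  classical
  induction s using Finset.induction_on with
  | empty => simp
  | @insert a s h ih =>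
      rw [Finset.biUnion_insert, Finset.sum_insert h]
      exact le_trans (sum_union_le_real hf) (by linarith)

lemma sum_image_le_real {α β : Type*} [DecidableEq β] {s : Finset α} {g : α → β}
    {f : β → ℝ} (hf : ∀ b, 0 ≤ f b) :
    (s.image g).sum f ≤ ∑ a ∈ s, f (g a) := by
  classical
  induction s using Finset.induction_on with
  | empty => simp
  | @insert a s h ih =>
      rw [Finset.image_insert, Finset.sum_insert h]
      by_cases hg : g a ∈ s.image g
      · rw [Finset.insert_eq_self.2 hg]; have := hf (g a); linarith
      · rw [Finset.sum_insert hg]; linarith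

lemma dist1_self {d : ℕ} (x : Zd d) : dist1 x x = 0 := by simp [dist1]

lemma eq_of_dist1_eq_zero {d : ℕ} {x y : Zd d} (h : dist1 x y = 0) : x = y := by
  unfold dist1 at h
  funext i
  have := (Finset.sum_eq_zero_iff).1 h i (Finset.mem_univ i)
  omega

lemma box_finite {d : ℕ} (L : ℕ) (x₀ : Zd d) : (box L x₀).Finite := by
  apply Set.Finite.subset (Set.Finite.pi (fun i => Set.finite_Icc (x₀ i - L) (x₀ i + L)))
  intro y hy
  rw [Set.mem_pi]
  intro i _
  have h : 2 * (y i - x₀ i).natAbs ≤ L := hy i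
  rw [Set.mem_Icc]
  omega

lemma dist1_step {d L : ℕ} {x₀ x y : Zd d} (hx : x ∈ box L x₀) (hy : y ∈ box L x₀)
    (h : x ≠ y) :
    ∃ z ∈ box L x₀, dist1 x z ≤ 1 ∧ dist1 z y + 1 ≤ dist1 x y := by
  classical
  have hex : ∃ i, x i ≠ y i := by
    by_contra hc; push_neg at hc; exact h (funext hc)
  obtain ⟨i, hi⟩ := hex
  set ε : ℤ := if x i < y i then 1 else -1 with hε
  set z : Zd d := fun j => if j = i then x i + ε else x j with hz
  have hzi : z i = x i + ε := by simp [hz]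
  have hzj : ∀ j, j ≠ i → z j = x j := fun j hj => by simp [hz, hj]
  have hεv : (x i < y i ∧ ε = 1) ∨ (y i < x i ∧ ε = -1) := by
    rcases lt_or_gt_of_ne hi with h1 | h1
    · exact Or.inl ⟨h1, if_pos h1⟩
    · exact Or.inr ⟨h1, if_neg (by omega)⟩
  refine ⟨z, ?_, ?_, ?_⟩
  · intro j
    by_cases hj : j = i
    · subst hj
      have h1 : 2 * (x j - x₀ j).natAbs ≤ L := hx j
      have h2 : 2 * (y j - x₀ j).natAbs ≤ L := hy j
      rw [hzi]
      rcases hεv with ⟨ha, hb⟩ | ⟨ha, hb⟩ <;> rw [hb] <;> omega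
    · rw [hzj j hj]; exact hx j
  · calc dist1 x z = ∑ j, (x j - z j).natAbs := rfl
      _ = (x i - z i).natAbs :=
          Finset.sum_eq_single_of_mem (f := fun j => (x j - z j).natAbs) i
            (Finset.mem_univ i) (fun b _ hb => by show (x b - z b).natAbs = 0; rw [hzj b hb]; omega)
      _ ≤ 1 := by rw [hzi]; rcases hεv with ⟨_, hb⟩ | ⟨_, hb⟩ <;> rw [hb] <;> omega
  · have e1 : (z i - y i).natAbs + ∑ j ∈ Finset.univ.erase i, (z j - y j).natAbs
        = dist1 z y := by
      exact Finset.add_sum_erase Finset.univ (fun j => (z j - y j).natAbs) (Finset.mem_univ i)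
    have e2 : (x i - y i).natAbs + ∑ j ∈ Finset.univ.erase i, (x j - y j).natAbs
        = dist1 x y := by
      exact Finset.add_sum_erase Finset.univ (fun j => (x j - y j).natAbs) (Finset.mem_univ i)
    have e3 : ∑ j ∈ Finset.univ.erase i, (z j - y j).natAbs
        = ∑ j ∈ Finset.univ.erase i, (x j - y j).natAbs :=
      Finset.sum_congr rfl fun j hj => by rw [hzj j (Finset.ne_of_mem_erase hj)]
    have key : (z i - y i).natAbs + 1 = (x i - y i).natAbs := by
      rw [hzi]; rcases hεv with ⟨h1, h2⟩ | ⟨h1, h2⟩ <;> rw [h2] <;> omega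
    omega

lemma dist1_le_one {d : ℕ} {x z : Zd d} (h : dist1 x z ≤ 1) :
    z = x ∨ ∃ i, z = x + unitVec i ∨ z = x - unitVec i := by
  classical
  by_cases hz : z = x
  · exact Or.inl hz
  right
  have hex : ∃ i, x i ≠ z i := by
    by_contra hc; push_neg at hc; exact hz (funext fun i => (hc i).symm)
  obtain ⟨i, hi⟩ := hex
  have h1 : (x i - z i).natAbs + ∑ j ∈ Finset.univ.erase i, (x j - z j).natAbs
      = dist1 x z := by
    exact Finset.add_sum_erase Finset.univ (fun j => (x j - z j).natAbs) (Finset.mem_univ i)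
  have h2 : 1 ≤ (x i - z i).natAbs := by omega
  have h3 : ∑ j ∈ Finset.univ.erase i, (x j - z j).natAbs = 0 := by omega
  have h4 : ∀ j, j ≠ i → z j = x j := by
    intro j hj
    have := Finset.sum_eq_zero_iff.1 h3 j (Finset.mem_erase.2 ⟨hj, Finset.mem_univ j⟩)
    omega
  refine ⟨i, ?_⟩
  have h6 : z i = x i + 1 ∨ z i = x i - 1 := by omega
  rcases h6 with h6 | h6
  · left; funext j; by_cases hj : j = i
    · subst hj; simp [Pi.add_apply, unitVec, h6]
    · simp [Pi.add_apply, unitVec, hj, h4 j hj]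
  · right; funext j; by_cases hj : j = i
    · subst hj; simp [Pi.sub_apply, unitVec, h6]
    · simp [Pi.sub_apply, unitVec, hj, h4 j hj]

end Aux

/-- the positive normalized ground state of `H_Λ` satisfies
`ψ_g(x) ≥ Y^{-m} Σ_{y ∈ Λ, ‖x-y‖₁ ≤ m} ψ_g(y)` with `Y = 2d + 1 + spr(V)`. -/
theorem stmt11 (d L : ℕ) (hd : 0 < d) (hL : 0 < L) (x₀ : Zd d)
    (V : Zd d → ℝ) (hV : BddPot V) (ψ : Zd d → ℝ)
    (hnorm : norm2 ψ = 1) (hpos : ∀ x ∈ box L x₀, 0 < ψ x)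
    (heig : eigOn V (box L x₀) ψ (Ebox V (box L x₀))) :
    ∀ x ∈ box L x₀, ∀ m : ℕ,
      (2 * (d : ℝ) + 1 + spr V) ^ (-(m : ℤ)) *
        (∑ᶠ y ∈ {y | y ∈ box L x₀ ∧ dist1 x y ≤ m}, ψ y) ≤ ψ x := by
  classical
  intro x hx m
  have hfin : (box L x₀).Finite := box_finite L x₀
  set F : Finset (Zd d) := hfin.toFinset with hF
  have hmemF : ∀ y, y ∈ F ↔ y ∈ box L x₀ := fun y => hfin.mem_toFinset
  have hψ0 : ∀ y, 0 ≤ ψ y := by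
    intro y; by_cases hy : y ∈ box L x₀
    · exact (hpos y hy).le
    · rw [heig.1 y hy]
  set Y : ℝ := 2 * (d : ℝ) + 1 + spr V with hY
  obtain ⟨C, hC⟩ := hV
  have hbdd : BddAbove (Set.range V) := ⟨C, by rintro _ ⟨w, rfl⟩; exact (abs_le.1 (hC w)).2⟩
  have hbddb : BddBelow (Set.range V) := ⟨-C, by rintro _ ⟨w, rfl⟩; exact (abs_le.1 (hC w)).1⟩
  have hVle : ∀ w, V w ≤ sSup (Set.range V) := fun w => le_csSup hbdd ⟨w, rfl⟩
  have hVge : ∀ w, sInf (Set.range V) ≤ V w := fun w => csInf_le hbddb ⟨w, rfl⟩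
  have hspr0 : 0 ≤ spr V := by
    have h1 := hVle x₀; have h2 := hVge x₀; unfold spr; linarith
  have hY1 : (1 : ℝ) ≤ Y := by
    have hd1 : (1 : ℝ) ≤ (d : ℝ) := by exact_mod_cast hd
    rw [hY]; linarith
  have hY0 : (0 : ℝ) < Y := by linarith
  set S : Zd d → ℝ := fun w => ∑ i, (ψ (w + unitVec i) + ψ (w - unitVec i)) with hS
  have hlap : ∀ w, negLap ψ w + S w = 2 * (d : ℝ) * ψ w := by
    intro w
    have h1 : negLap ψ w + S w = ∑ _i : Fin d, (2 * ψ w) := by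
      unfold negLap
      simp only [hS]
      rw [← Finset.sum_add_distrib]
      exact Finset.sum_congr rfl fun i _ => by ring
    rw [h1, Finset.sum_const, Finset.card_univ, Fintype.card_fin, nsmul_eq_mul]
    ring
  set E : ℝ := Ebox V (box L x₀) with hE
  have heq : ∀ w ∈ box L x₀, S w = (2 * (d : ℝ) + V w - E) * ψ w := by
    intro w hw
    have h1 := heig.2 w hw
    have h2 := hlap w
    have h3 : S w = 2 * (d : ℝ) * ψ w - E * ψ w + V w * ψ w := by linarith
    rw [h3]; ring
  have hx₀Λ : x₀ ∈ box L x₀ := by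
    intro i; simp
  have hFne : F.Nonempty := ⟨x₀, (hmemF x₀).2 hx₀Λ⟩
  obtain ⟨xm, hxmF, hxm⟩ := Finset.exists_max_image F ψ hFne
  have hxmΛ : xm ∈ box L x₀ := (hmemF xm).1 hxmF
  have hmax : ∀ y, ψ y ≤ ψ xm := by
    intro y; by_cases hy : y ∈ box L x₀
    · exact hxm y ((hmemF y).2 hy)
    · rw [heig.1 y hy]; exact (hpos xm hxmΛ).le
  have hSxm : S xm ≤ 2 * (d : ℝ) * ψ xm := by
    have h1 : S xm ≤ ∑ _i : Fin d, (2 * ψ xm) := by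
      simp only [hS]
      exact Finset.sum_le_sum fun i _ => by
        have := hmax (xm + unitVec i); have := hmax (xm - unitVec i); linarith
    rw [Finset.sum_const, Finset.card_univ, Fintype.card_fin, nsmul_eq_mul] at h1
    calc S xm ≤ (d : ℝ) * (2 * ψ xm) := h1
      _ = 2 * (d : ℝ) * ψ xm := by ring
  have hEV : ∀ w, V w - E ≤ spr V := by
    intro w
    have h1 : V xm ≤ E := by
      have heqm := heq xm hxmΛ
      have hp := hpos xm hxmΛ
      by_contra hc
      push_neg at hc
      have hpos2 : (0 : ℝ) < (V xm - E) * ψ xm :=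
        mul_pos (by linarith) hp
      nlinarith [heqm, hSxm]
    have h2 := hVle w
    have h3 := hVge xm
    unfold spr
    linarith
  have hstep1 : ∀ w ∈ box L x₀, ψ w + S w ≤ Y * ψ w := by
    intro w hw
    rw [heq w hw]
    have h1 := hEV w
    have hp := (hpos w hw).le
    have h2 : (V w - E) * ψ w ≤ spr V * ψ w := mul_le_mul_of_nonneg_right h1 hp
    rw [hY]
    nlinarith
  set B : ℕ → Zd d → Finset (Zd d) := fun k w => F.filter (fun y => dist1 w y ≤ k) with hB
  have main : ∀ k : ℕ, ∀ w ∈ box L x₀, (B k w).sum ψ ≤ Y ^ k * ψ w := by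
    intro k
    induction k with
    | zero =>
      intro w hw
      have hBw : B 0 w = {w} := by
        ext y
        simp only [hB, Finset.mem_filter, Finset.mem_singleton, hmemF, Nat.le_zero]
        constructor
        · rintro ⟨hy, h0⟩; exact (eq_of_dist1_eq_zero h0).symm
        · rintro rfl; exact ⟨hw, dist1_self _⟩
      rw [hBw, Finset.sum_singleton, pow_zero, one_mul]
    | succ k ih =>
      intro w hw
      set T : Finset (Zd d) := F.filter (fun z => dist1 w z ≤ 1) with hT
      have hcover : B (k + 1) w ⊆ T.biUnion (fun z => B k z) := by
        intro y hy
        simp only [hB, Finset.mem_filter] at hy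
        obtain ⟨hyF, hyd⟩ := hy
        rw [Finset.mem_biUnion]
        by_cases hxy : w = y
        · refine ⟨w, ?_, ?_⟩
          · simp only [hT, Finset.mem_filter]
            exact ⟨(hmemF w).2 hw, by rw [dist1_self]; omega⟩
          · simp only [hB, Finset.mem_filter]
            refine ⟨hyF, ?_⟩
            rw [← hxy, dist1_self]; omega
        · obtain ⟨z, hzΛ, hz1, hz2⟩ := dist1_step hw ((hmemF y).1 hyF) hxy
          refine ⟨z, ?_, ?_⟩
          · simp only [hT, Finset.mem_filter]
            exact ⟨(hmemF z).2 hzΛ, hz1⟩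
          · simp only [hB, Finset.mem_filter]
            exact ⟨hyF, by omega⟩
      have hTsum : ∑ z ∈ T, ψ z ≤ ψ w + S w := by
        set Img : Finset (Zd d) := (Finset.univ : Finset (Fin d × Bool)).image
          (fun p => if p.2 then w + unitVec p.1 else w - unitVec p.1) with hImg
        have hsub : T ⊆ insert w Img := by
          intro z hz
          have hz1 := (Finset.mem_filter.1 hz).2
          rcases dist1_le_one hz1 with h | ⟨i, h | h⟩
          · simp [h]
          · apply Finset.mem_insert_of_mem
            rw [hImg]
            exact Finset.mem_image.2 ⟨(i, true), Finset.mem_univ _, by simp [h]⟩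
          · apply Finset.mem_insert_of_mem
            rw [hImg]
            exact Finset.mem_image.2 ⟨(i, false), Finset.mem_univ _, by simp [h]⟩
        have h1 : ∑ z ∈ T, ψ z ≤ ∑ z ∈ insert w Img, ψ z :=
          Finset.sum_le_sum_of_subset_of_nonneg hsub fun y _ _ => hψ0 y
        have h2 : ∑ z ∈ insert w Img, ψ z ≤ ψ w + ∑ z ∈ Img, ψ z := by
          by_cases hw' : w ∈ Img
          · rw [Finset.insert_eq_self.2 hw']; linarith [hψ0 w]
          · rw [Finset.sum_insert hw']
        have h3 : ∑ z ∈ Img, ψ z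
            ≤ ∑ p : Fin d × Bool, ψ (if p.2 then w + unitVec p.1 else w - unitVec p.1) :=
          sum_image_le_real hψ0
        have h4 : ∑ p : Fin d × Bool, ψ (if p.2 then w + unitVec p.1 else w - unitVec p.1)
            = S w := by
          rw [Fintype.sum_prod_type]
          simp only [hS]
          exact Finset.sum_congr rfl fun i _ => by simp [Fintype.sum_bool]
        linarith
      calc (B (k + 1) w).sum ψ
          ≤ (T.biUnion fun z => B k z).sum ψ :=
            Finset.sum_le_sum_of_subset_of_nonneg hcover fun y _ _ => hψ0 y
        _ ≤ ∑ z ∈ T, (B k z).sum ψ := sum_biUnion_le_real hψ0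
        _ ≤ ∑ z ∈ T, Y ^ k * ψ z :=
            Finset.sum_le_sum fun z hz => ih z ((hmemF z).1 (Finset.mem_filter.1 hz).1)
        _ = Y ^ k * ∑ z ∈ T, ψ z := by rw [Finset.mul_sum]
        _ ≤ Y ^ k * (ψ w + S w) :=
            mul_le_mul_of_nonneg_left hTsum (pow_pos hY0 k).le
        _ ≤ Y ^ k * (Y * ψ w) :=
            mul_le_mul_of_nonneg_left (hstep1 w hw) (pow_pos hY0 k).le
        _ = Y ^ (k + 1) * ψ w := by ring
  have hseteq : {y | y ∈ box L x₀ ∧ dist1 x y ≤ m} = ↑(B m x) := by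
    ext y
    simp only [hB, Finset.coe_filter, Set.mem_setOf_eq, hmemF]
  rw [hseteq, finsum_mem_coe_finset, zpow_neg, zpow_natCast]
  exact (inv_mul_le_iff₀ (pow_pos hY0 m)).2 (main m x hx)
end
end
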